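/- arXiv:2203.13552 — 4 statements merged into one kernel-verified Lean document; each statement's English description precedes it below -/
import Mathlib

section
/- (SGRAND yields ML decisions.) Let C ⊆ {0,1}^n be a nonempty codebook, σ > 0, and y ∈ ℝ^n. Let c̃_i = 1 if y_i < 0 and 0 otherwise, and ℓ_i = |2y_i/σ²|. Then for any binary vector ẑ with c̃ ⊕ ẑ ∈ C: ẑ minimizes the score ∑_{i=1}^n e_i·ℓ_i over the set {e ∈ {0,1}^n : c̃ ⊕ e ∈ C} if and only if the codeword c̃ ⊕ ẑ maximizes the likelihood ∏_{i=1}^n f(y_i|c_i) over all c ∈ C. -/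
open Finset Real

lemma coord_id (x σ : ℝ) (hσ : 0 < σ) (a b : Fin 2) (ha : a = if x < 0 then 1 else 0) :
    -(x - (1 - 2 * ((b:ℕ):ℝ)))^2 / (2*σ^2) =
      (-(x^2+1)/(2*σ^2) + |x|/σ^2) - (((a+b : Fin 2):ℕ):ℝ) * |2*x/σ^2| := by
  have hσ2 : (0:ℝ) < σ^2 := by positivity
  have hσ2' : σ^2 ≠ 0 := ne_of_gt hσ2
  have habs : |2*x/σ^2| = 2*|x|/σ^2 := by
    rw [abs_div, abs_of_pos hσ2, abs_mul]
    norm_num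
  rw [habs]
  by_cases hx : x < 0
  · simp only [if_pos hx] at ha
    subst ha
    have hax : |x| = -x := abs_of_neg hx
    fin_cases b <;> simp [hax] <;> field_simp <;> ring
  · simp only [if_neg hx] at ha
    subst ha
    have hax : |x| = x := abs_of_nonneg (not_lt.mp hx)
    fin_cases b <;> simp [hax] <;> field_simp <;> ring

/-- SGRAND yields ML decisions: Let C ⊆ {0,1}^n be a nonempty codebook,
σ > 0, and y ∈ ℝ^n. Let ctld_i = 1 if y_i < 0 and 0 otherwise, and ℓ_i = |2y_i/σ²|.
Then for any binary vector zhat with ctld ⊕ zhat ∈ C: zhat minimizes the score ∑ e_i·ℓ_i over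
{e ∈ {0,1}^n : ctld ⊕ e ∈ C} if and only if the codeword ctld ⊕ zhat maximizes the likelihood
∏ f(y_i|c_i) over all c ∈ C. -/
theorem sgrand_is_ml (n : ℕ) (σ : ℝ) (hσ : 0 < σ)
    (C : Set (Fin n → Fin 2)) (hC : C.Nonempty) (y : Fin n → ℝ)
    (f : ℝ → ℝ → ℝ)
    (hf : ∀ y' c : ℝ, f y' c =
      (2 * Real.pi * σ ^ 2) ^ (-(1 / 2 : ℝ)) *
        Real.exp (-(y' - (1 - 2 * c)) ^ 2 / (2 * σ ^ 2)))
    (ctld : Fin n → Fin 2) (hctld : ∀ i, ctld i = if y i < 0 then 1 else 0)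
    (ℓ : Fin n → ℝ) (hℓ : ∀ i, ℓ i = |2 * y i / σ ^ 2|)
    (zhat : Fin n → Fin 2) (hzhat : ctld + zhat ∈ C) :
    (∀ e : Fin n → Fin 2, ctld + e ∈ C →
      ∑ i, ((zhat i : ℕ) : ℝ) * ℓ i ≤ ∑ i, ((e i : ℕ) : ℝ) * ℓ i) ↔
    (∀ c ∈ C, ∏ i, f (y i) ((c i : ℕ) : ℝ) ≤
      ∏ i, f (y i) ((((ctld + zhat) i : Fin 2) : ℕ) : ℝ)) := by
  have h2 : ∀ a b : Fin 2, a + (a + b) = b := by decide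
  have hinv : ∀ c : Fin n → Fin 2, ctld + (ctld + c) = c :=
    fun c => funext fun i => h2 (ctld i) (c i)
  set S : (Fin n → Fin 2) → ℝ := fun e => ∑ i, ((e i : ℕ) : ℝ) * ℓ i with hS
  set A : ℝ := (2 * Real.pi * σ ^ 2) ^ (-(1 / 2 : ℝ)) with hA
  have hApos : 0 < A := Real.rpow_pos_of_pos (by positivity) _
  set K : ℝ := ∏ i, (A * Real.exp (-((y i)^2+1)/(2*σ^2) + |y i|/σ^2)) with hK
  have hKpos : 0 < K := Finset.prod_pos (fun i _ => by positivity)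
  -- likelihood formula
  have key : ∀ c : Fin n → Fin 2,
      ∏ i, f (y i) ((c i : ℕ) : ℝ) = K * Real.exp (-(S (ctld + c))) := by
    intro c
    rw [hS]
    simp only
    rw [← Finset.sum_neg_distrib, Real.exp_sum, hK, ← Finset.prod_mul_distrib]
    refine Finset.prod_congr rfl (fun i _ => ?_)
    rw [hf, hℓ i, mul_assoc, ← Real.exp_add]
    congr 1
    have := coord_id (y i) σ hσ (ctld i) (c i) (hctld i)
    simp only [Pi.add_apply]
    rw [this]
    ring
  constructor
  · intro hmin c hc
    rw [key c, key (ctld + zhat), hinv zhat]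
    have h1 : S zhat ≤ S (ctld + c) := by
      have := hmin (ctld + c) (by rwa [hinv c])
      simpa [hS] using this
    have : Real.exp (-(S (ctld + c))) ≤ Real.exp (-(S zhat)) := by
      rw [Real.exp_le_exp]; linarith
    nlinarith
  · intro hml e he
    have := hml (ctld + e) he
    rw [key (ctld + e), key (ctld + zhat), hinv e, hinv zhat] at this
    have h1 : Real.exp (-(S e)) ≤ Real.exp (-(S zhat)) :=
      le_of_mul_le_mul_left this hKpos
    rw [Real.exp_le_exp] at h1
    have : S zhat ≤ S e := by linarith
    simpa [hS] using this
end

section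
/- General metric GRAND optimality (covering quantized metrics as in DSGRAND): let C ⊆ {0,1}^n be a nonempty codebook and m ∈ ℝ^n an arbitrary real-valued bit-metric vector. Define hard decisions c̃_i = 1 if m_i < 0 and 0 otherwise, and weights w_i = |m_i|. Then for any ẑ ∈ {0,1}^n with c̃ ⊕ ẑ ∈ C: ẑ minimizes ∑_{i=1}^n e_i·w_i over {e ∈ {0,1}^n : c̃ ⊕ e ∈ C} if and only if c̃ ⊕ ẑ maximizes ∑_{i=1}^n (1−2c_i)·m_i over all c ∈ C. -/
lemma grand_key (n : ℕ) (m : Fin n → ℝ)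
    (ctld : Fin n → Fin 2) (hctld : ∀ i, ctld i = if m i < 0 then 1 else 0)
    (w : Fin n → ℝ) (hw : ∀ i, w i = |m i|) (e : Fin n → Fin 2) :
    ∑ i, (1 - 2 * ((((ctld + e) i : Fin 2) : ℕ) : ℝ)) * m i
      = (∑ i, w i) - 2 * ∑ i, ((e i : ℕ) : ℝ) * w i := by
  rw [Finset.mul_sum, ← Finset.sum_sub_distrib]
  refine Finset.sum_congr rfl fun i _ => ?_
  have he : e i = 0 ∨ e i = 1 := by omega
  simp only [Pi.add_apply, hctld i, hw i]
  rcases lt_or_ge (m i) 0 with h | h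
  · rw [if_pos h, abs_of_neg h]
    rcases he with h1 | h1 <;> rw [h1] <;> norm_num [show (((2:Fin 2)):ℕ)=0 from rfl] <;> ring
  · rw [if_neg (not_lt.2 h), abs_of_nonneg h]
    rcases he with h1 | h1 <;> rw [h1] <;> norm_num [show (((2:Fin 2)):ℕ)=0 from rfl] <;> ring

/-- General metric GRAND optimality: let C ⊆ {0,1}^n be a nonempty codebook
and m ∈ ℝ^n an arbitrary real-valued bit-metric vector. Define hard decisions
c̃_i = 1 if m_i < 0 and 0 otherwise, and weights w_i = |m_i|. Then for any ẑ ∈ {0,1}^n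
with c̃ ⊕ ẑ ∈ C: ẑ minimizes ∑ e_i·w_i over {e : c̃ ⊕ e ∈ C} if and only if c̃ ⊕ ẑ
maximizes ∑ (1−2c_i)·m_i over all c ∈ C. -/
theorem grand_metric_optimality (n : ℕ)
    (C : Set (Fin n → Fin 2)) (hC : C.Nonempty) (m : Fin n → ℝ)
    (ctld : Fin n → Fin 2) (hctld : ∀ i, ctld i = if m i < 0 then 1 else 0)
    (w : Fin n → ℝ) (hw : ∀ i, w i = |m i|)
    (zhat : Fin n → Fin 2) (hzhat : ctld + zhat ∈ C) :
    (∀ e : Fin n → Fin 2, ctld + e ∈ C →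
      ∑ i, ((zhat i : ℕ) : ℝ) * w i ≤ ∑ i, ((e i : ℕ) : ℝ) * w i) ↔
    (∀ c ∈ C, ∑ i, (1 - 2 * ((c i : ℕ) : ℝ)) * m i ≤
      ∑ i, (1 - 2 * ((((ctld + zhat) i : Fin 2) : ℕ) : ℝ)) * m i) := by
  have hinv : ∀ c : Fin n → Fin 2, ctld + (ctld + c) = c := by
    intro c; funext i; simp only [Pi.add_apply]; omega
  have key := grand_key n m ctld hctld w hw
  constructor
  · intro hmin c hc
    have h1 := hmin (ctld + c) (by rw [hinv]; exact hc)
    have k1 := key zhat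
    have k2 := key (ctld + c)
    rw [hinv] at k2
    linarith
  · intro hmax e he
    have h1 := hmax (ctld + e) he
    have k1 := key zhat
    have k2 := key e
    linarith
end

section
/- Mismatched-decoding rate is upper bounded by mutual information: let C be uniform on {0,1} and Y a real channel output with conditional densities f(y|0), f(y|1) (positive almost everywhere and integrable). For any measurable metric M : ℝ → ℝ, any s ≥ 0, and any r : {0,1} → (0,∞), assuming all the integrals below are finite, R(Y,C,M,s,r) := ∫ ∑_{c∈{0,1}} (1/2) f(y|c) · log₂( 2 e^{sM(y)(1−2c)} r(c) / ( e^{sM(y)} r(0) + e^{−sM(y)} r(1) ) ) dy ≤ I(C;Y) := ∫ ∑_{c∈{0,1}} (1/2) f(y|c) · log₂( 2 f(y|c) / ( f(y|0) + f(y|1) ) ) dy. -/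
open MeasureTheory Real

private lemma gibbs_log (a b u v : ℝ) (ha : 0 < a) (hb : 0 < b) (hu : 0 < u) (hv : 0 < v) :
    a * Real.log (u / (u + v)) + b * Real.log (v / (u + v)) ≤
    a * Real.log (a / (a + b)) + b * Real.log (b / (a + b)) := by
  have huv : 0 < u + v := by linarith
  have hab : 0 < a + b := by linarith
  have h1 : a * (Real.log (u / (u + v)) - Real.log (a / (a + b))) ≤
      a * ((u / (u + v)) / (a / (a + b)) - 1) := by
    apply mul_le_mul_of_nonneg_left _ ha.le
    rw [← Real.log_div (by positivity) (by positivity)]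
    exact Real.log_le_sub_one_of_pos (by positivity)
  have h2 : b * (Real.log (v / (u + v)) - Real.log (b / (a + b))) ≤
      b * ((v / (u + v)) / (b / (a + b)) - 1) := by
    apply mul_le_mul_of_nonneg_left _ hb.le
    rw [← Real.log_div (by positivity) (by positivity)]
    exact Real.log_le_sub_one_of_pos (by positivity)
  have h3 : a * ((u / (u + v)) / (a / (a + b)) - 1) +
      b * ((v / (u + v)) / (b / (a + b)) - 1) = 0 := by
    field_simp
    ring
  nlinarith [h1, h2, h3]

private lemma gibbs_logb (a b u v : ℝ) (ha : 0 < a) (hb : 0 < b) (hu : 0 < u) (hv : 0 < v) :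
    a * Real.logb 2 (2 * u / (u + v)) + b * Real.logb 2 (2 * v / (u + v)) ≤
    a * Real.logb 2 (2 * a / (a + b)) + b * Real.logb 2 (2 * b / (a + b)) := by
  have huv : 0 < u + v := by linarith
  have hab : 0 < a + b := by linarith
  have h2 : (0:ℝ) < Real.log 2 := Real.log_pos (by norm_num)
  have e1 : ∀ x w : ℝ, 0 < x → 0 < w →
      Real.logb 2 (2 * x / w) = 1 + Real.log (x / w) / Real.log 2 := by
    intro x w hx hw
    rw [show 2 * x / w = 2 * (x / w) by ring,
      Real.logb, Real.log_mul (by norm_num) (by positivity)]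
    field_simp [Real.logb]
  rw [e1 u (u+v) hu huv, e1 v (u+v) hv huv, e1 a (a+b) ha hab, e1 b (a+b) hb hab]
  have := gibbs_log a b u v ha hb hu hv
  have hdiv : (a * Real.log (u / (u + v)) + b * Real.log (v / (u + v))) / Real.log 2 ≤
      (a * Real.log (a / (a + b)) + b * Real.log (b / (a + b))) / Real.log 2 := by
    gcongr
  have ee : ∀ X Y : ℝ, a * (1 + X / Real.log 2) + b * (1 + Y / Real.log 2) =
      (a + b) + (a * X + b * Y) / Real.log 2 := fun X Y => by ring
  rw [ee, ee]
  linarith [hdiv]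

/-- Mismatched-decoding rate is upper bounded by mutual information:
let C be uniform on {0,1} and Y a real channel output with conditional densities
f(y|0) = f0 y, f(y|1) = f1 y (positive almost everywhere and integrable). For any
measurable metric M : ℝ → ℝ, any s ≥ 0, and any r : {0,1} → (0,∞) (here r0, r1 > 0),
assuming all the integrals below are finite (integrable integrands),
R(Y,C,M,s,r) = ∫ ∑_{c∈{0,1}} (1/2) f(y|c) log₂( 2 e^{sM(y)(1−2c)} r(c) /
  ( e^{sM(y)} r(0) + e^{−sM(y)} r(1) ) ) dy
≤ I(C;Y) = ∫ ∑_{c∈{0,1}} (1/2) f(y|c) log₂( 2 f(y|c) / ( f(y|0) + f(y|1) ) ) dy. -/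
theorem mismatched_rate_le_mutualInfo
    (f0 f1 : ℝ → ℝ)
    (hf0pos : ∀ᵐ y ∂(volume : Measure ℝ), 0 < f0 y)
    (hf1pos : ∀ᵐ y ∂(volume : Measure ℝ), 0 < f1 y)
    (hf0int : Integrable f0) (hf1int : Integrable f1)
    (M : ℝ → ℝ) (hM : Measurable M)
    (s : ℝ) (hs : 0 ≤ s) (r0 r1 : ℝ) (hr0 : 0 < r0) (hr1 : 0 < r1)
    (hRint : Integrable (fun y =>
      (1 / 2) * f0 y * logb 2 (2 * exp (s * M y) * r0 /
          (exp (s * M y) * r0 + exp (-(s * M y)) * r1)) +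
      (1 / 2) * f1 y * logb 2 (2 * exp (-(s * M y)) * r1 /
          (exp (s * M y) * r0 + exp (-(s * M y)) * r1))))
    (hIint : Integrable (fun y =>
      (1 / 2) * f0 y * logb 2 (2 * f0 y / (f0 y + f1 y)) +
      (1 / 2) * f1 y * logb 2 (2 * f1 y / (f0 y + f1 y)))) :
    (∫ y, ((1 / 2) * f0 y * logb 2 (2 * exp (s * M y) * r0 /
          (exp (s * M y) * r0 + exp (-(s * M y)) * r1)) +
        (1 / 2) * f1 y * logb 2 (2 * exp (-(s * M y)) * r1 /
          (exp (s * M y) * r0 + exp (-(s * M y)) * r1)))) ≤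
    ∫ y, ((1 / 2) * f0 y * logb 2 (2 * f0 y / (f0 y + f1 y)) +
        (1 / 2) * f1 y * logb 2 (2 * f1 y / (f0 y + f1 y))) := by
  apply integral_mono_ae hRint hIint
  filter_upwards [hf0pos, hf1pos] with y h0 h1
  set u := Real.exp (s * M y) * r0 with hu_def
  set v := Real.exp (-(s * M y)) * r1 with hv_def
  have hu : 0 < u := by positivity
  have hv : 0 < v := by positivity
  have key := gibbs_logb (f0 y) (f1 y) u v h0 h1 hu hv
  have e0 : 2 * Real.exp (s * M y) * r0 = 2 * u := by rw [hu_def]; ring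
  have e1 : 2 * Real.exp (-(s * M y)) * r1 = 2 * v := by rw [hv_def]; ring
  rw [e0, e1]
  nlinarith [key]
end

section
/- The matched metric achieves the mutual information: let C be uniform on {0,1} and Y a real channel output with conditional densities f(y|0), f(y|1) positive almost everywhere, and let τ(y) = log(f(y|0)/f(y|1)). Then for every y and every c ∈ {0,1}, 2 e^{(1/2)τ(y)(1−2c)} / ( e^{τ(y)/2} + e^{−τ(y)/2} ) = 2 f(y|c) / ( f(y|0) + f(y|1) ); consequently, with metric M = τ, parameter s = 1/2, and r ≡ 1, R(Y,C,τ,1/2,1) = I(C;Y), and hence the LM-rate satisfies R_LM(Y,C,τ(Y)) = I(C;Y) (given R(Y,C,M,s,r) ≤ I(C;Y) for all M, s, r). -/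
open MeasureTheory Real

/-- The matched metric achieves the mutual information: let C be uniform
on {0,1} and Y a real channel output with conditional densities f(y|0) = f0 y,
f(y|1) = f1 y positive, and let τ(y) = log(f(y|0)/f(y|1)). Then for every y and every
c ∈ {0,1},
2 e^{(1/2)τ(y)(1−2c)} / ( e^{τ(y)/2} + e^{−τ(y)/2} ) = 2 f(y|c) / ( f(y|0) + f(y|1) );
consequently, with metric M = τ, parameter s = 1/2, and r ≡ 1,
R(Y,C,τ,1/2,1) = I(C;Y), and hence the LM-rate (the supremum of R(Y,C,τ,s,r) over
s ≥ 0 and positive r) equals I(C;Y), given R(Y,C,M,s,r) ≤ I(C;Y) for all M, s, r. -/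
theorem matched_metric_achieves_mutualInfo
    (f0 f1 : ℝ → ℝ) (hf0 : ∀ y, 0 < f0 y) (hf1 : ∀ y, 0 < f1 y)
    (τ : ℝ → ℝ) (hτ : ∀ y, τ y = Real.log (f0 y / f1 y))
    (R : (ℝ → ℝ) → ℝ → ℝ → ℝ → ℝ)
    (hR : ∀ (M : ℝ → ℝ) (s r0 r1 : ℝ), R M s r0 r1 =
      ∫ y, ((1 / 2) * f0 y * logb 2 (2 * exp (s * M y) * r0 /
            (exp (s * M y) * r0 + exp (-(s * M y)) * r1)) +
          (1 / 2) * f1 y * logb 2 (2 * exp (-(s * M y)) * r1 /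
            (exp (s * M y) * r0 + exp (-(s * M y)) * r1))))
    (I : ℝ) (hI : I = ∫ y, ((1 / 2) * f0 y * logb 2 (2 * f0 y / (f0 y + f1 y)) +
        (1 / 2) * f1 y * logb 2 (2 * f1 y / (f0 y + f1 y)))) :
    (∀ y : ℝ, ∀ c : Fin 2,
      2 * exp ((1 / 2) * τ y * (1 - 2 * ((c : ℕ) : ℝ))) /
          (exp (τ y / 2) + exp (-(τ y / 2))) =
        2 * (if c = 0 then f0 y else f1 y) / (f0 y + f1 y)) ∧
    R τ (1 / 2) 1 1 = I ∧
    ((∀ (M : ℝ → ℝ) (s r0 r1 : ℝ), 0 ≤ s → 0 < r0 → 0 < r1 → R M s r0 r1 ≤ I) →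
      sSup {x : ℝ | ∃ s r0 r1 : ℝ, 0 ≤ s ∧ 0 < r0 ∧ 0 < r1 ∧ R τ s r0 r1 = x} = I) := by
  have hfe : ∀ y, exp (τ y / 2) * exp (τ y / 2) * f1 y = f0 y := by
    intro y
    have h1 : exp (τ y / 2) * exp (τ y / 2) = f0 y / f1 y := by
      rw [← Real.exp_add]
      have h2 : τ y / 2 + τ y / 2 = τ y := by ring
      rw [h2, hτ y, Real.exp_log (div_pos (hf0 y) (hf1 y))]
    rw [h1]; exact div_mul_cancel₀ _ (hf1 y).ne'
  have key0 : ∀ y, 2 * exp (τ y / 2) / (exp (τ y / 2) + exp (-(τ y / 2))) =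
      2 * f0 y / (f0 y + f1 y) := by
    intro y
    have hE : (0:ℝ) < exp (τ y / 2) := Real.exp_pos _
    have hd : (0:ℝ) < exp (τ y / 2) + exp (-(τ y / 2)) :=
      add_pos hE (Real.exp_pos _)
    have hd2 : (0:ℝ) < f0 y + f1 y := add_pos (hf0 y) (hf1 y)
    rw [← hfe y, Real.exp_neg]
    have hden2 : (0:ℝ) < exp (τ y / 2) * exp (τ y / 2) * f1 y + f1 y :=
      add_pos (mul_pos (mul_pos hE hE) (hf1 y)) (hf1 y)
    have hden1 : (0:ℝ) < exp (τ y / 2) + (exp (τ y / 2))⁻¹ := by positivity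
    rw [div_eq_div_iff hden1.ne' hden2.ne']
    field_simp
  have key1 : ∀ y, 2 * exp (-(τ y / 2)) / (exp (τ y / 2) + exp (-(τ y / 2))) =
      2 * f1 y / (f0 y + f1 y) := by
    intro y
    have hE : (0:ℝ) < exp (τ y / 2) := Real.exp_pos _
    have hd : (0:ℝ) < exp (τ y / 2) + exp (-(τ y / 2)) :=
      add_pos hE (Real.exp_pos _)
    have hd2 : (0:ℝ) < f0 y + f1 y := add_pos (hf0 y) (hf1 y)
    rw [← hfe y, Real.exp_neg]
    have hden2 : (0:ℝ) < exp (τ y / 2) * exp (τ y / 2) * f1 y + f1 y :=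
      add_pos (mul_pos (mul_pos hE hE) (hf1 y)) (hf1 y)
    have hden1 : (0:ℝ) < exp (τ y / 2) + (exp (τ y / 2))⁻¹ := by positivity
    rw [div_eq_div_iff hden1.ne' hden2.ne']
    field_simp
  have part2 : R τ (1 / 2) 1 1 = I := by
    rw [hR, hI]
    refine integral_congr_ae (Filter.Eventually.of_forall fun y => ?_)
    have e0 : (1:ℝ) / 2 * τ y = τ y / 2 := by ring
    simp only [mul_one, e0, key0 y, key1 y]
  refine ⟨?_, part2, ?_⟩
  · intro y c
    fin_cases c
    · simp only [Fin.isValue, Fin.val_zero, Nat.cast_zero, if_pos]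
      have e0 : (1:ℝ) / 2 * τ y * (1 - 2 * 0) = τ y / 2 := by ring
      rw [e0]; exact key0 y
    · simp only [Fin.isValue, Fin.val_one, Nat.cast_one]
      have e0 : (1:ℝ) / 2 * τ y * (1 - 2 * 1) = -(τ y / 2) := by ring
      rw [e0, if_neg (by decide)]; exact key1 y
  · intro hub
    set S := {x : ℝ | ∃ s r0 r1 : ℝ, 0 ≤ s ∧ 0 < r0 ∧ 0 < r1 ∧ R τ s r0 r1 = x} with hS
    have hmem : I ∈ S := ⟨1/2, 1, 1, by norm_num, one_pos, one_pos, part2⟩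
    have hub' : ∀ x ∈ S, x ≤ I := by
      rintro x ⟨s, r0, r1, hs, h0, h1, rfl⟩
      exact hub τ s r0 r1 hs h0 h1
    exact le_antisymm (csSup_le ⟨I, hmem⟩ hub') (le_csSup ⟨I, hub'⟩ hmem)
end
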